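/- Let Q be an abstract polytope of rank ≥ 0 that is prime with respect to the join, let m ≥ 1, and let P = Q * ⋯ * Q be the m-fold join of Q with itself. Then Aut(P) is isomorphic as a group to the semidirect product (∏_{i=1}^m Aut(Q)) ⋊ Sym(m), where the symmetric group Sym(m) acts on the direct product of m copies of Aut(Q) by permuting the coordinates (the wreath product Aut(Q) ≀ Sym(m)). -/

import Mathlib

universe u v

/-- An abstract polytope of rank `n ≥ -1`: a partial order with a least element (the `⊥` of the
`OrderBot` instance) and a greatest element, in which every maximal chain has exactly `n + 2`
elements, every interval admitting a maximal chain of at least 4 elements is connected, and the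
diamond condition holds. -/
structure IsAbstractPolytope (P : Type u) [PartialOrder P] [OrderBot P] (n : ℤ) : Prop where
  neg_one_le : -1 ≤ n
  exists_top : ∃ t : P, IsTop t
  maxChain_card : ∀ s : Set P, IsMaxChain (· ≤ ·) s → s.ncard = (n + 2).toNat
  connected : ∀ x z : P, x ≤ z →
      (∃ c : Set (Set.Icc x z), IsMaxChain (· ≤ ·) c ∧ 4 ≤ c.ncard) →
      ∀ F G : Set.Icc x z, (F : P) ≠ x → (F : P) ≠ z → (G : P) ≠ x → (G : P) ≠ z →
        Relation.ReflTransGen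
          (fun a b : Set.Icc x z =>
            ((a : P) ≠ x ∧ (a : P) ≠ z ∧ (b : P) ≠ x ∧ (b : P) ≠ z) ∧
              ((a : P) ≤ (b : P) ∨ (b : P) ≤ (a : P))) F G
  diamond : ∀ x z : P, x < z →
      (∀ c : Set (Set.Icc x z), IsMaxChain (· ≤ ·) c → c.ncard = 4) →
      {y : P | x < y ∧ y < z}.ncard = 2

/-- `x` has rank `k` if every maximal chain of the interval `[⊥, x] = Set.Iic x`
has exactly `k + 2` elements. -/
def HasRank {P : Type u} [PartialOrder P] [OrderBot P] (x : P) (k : ℤ) : Prop :=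
  ∀ c : Set (Set.Iic x), IsMaxChain (· ≤ ·) c → c.ncard = (k + 2).toNat

/-- The Cartesian product `P ×c Q` of two bounded posets: the subposet of `P × Q`
consisting of `(⊥, ⊥)` together with all pairs with both entries different from `⊥`.
(The join `P * Q` is just `P × Q` with the componentwise order.) -/
abbrev CartProd (P : Type u) (Q : Type v) [PartialOrder P] [OrderBot P]
    [PartialOrder Q] [OrderBot Q] : Type (max u v) :=
  {x : P × Q // x = (⊥, ⊥) ∨ (x.1 ≠ ⊥ ∧ x.2 ≠ ⊥)}

instance CartProd.instOrderBot (P : Type u) (Q : Type v) [PartialOrder P] [OrderBot P]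
    [PartialOrder Q] [OrderBot Q] : OrderBot (CartProd P Q) where
  bot := ⟨(⊥, ⊥), Or.inl rfl⟩
  bot_le x := show ((⊥, ⊥) : P × Q) ≤ x.val from bot_le

/-- The iterated Cartesian product of a family of bounded posets: tuples which are either
everywhere `⊥` or nowhere `⊥`. -/
abbrev CartPi {ι : Type v} (Q : ι → Type u) [∀ i, PartialOrder (Q i)] [∀ i, OrderBot (Q i)] :
    Type (max u v) :=
  {f : (i : ι) → Q i // (∀ i, f i = ⊥) ∨ (∀ i, f i ≠ ⊥)}

instance CartPi.instOrderBot {ι : Type v} (Q : ι → Type u) [∀ i, PartialOrder (Q i)]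
    [∀ i, OrderBot (Q i)] : OrderBot (CartPi Q) where
  bot := ⟨fun _ => ⊥, Or.inl fun _ => rfl⟩
  bot_le f := show (fun _ => ⊥) ≤ f.val from bot_le

/-- The `k`-fold Cartesian product of a bounded poset with itself. -/
abbrev CartPow (P : Type u) [PartialOrder P] [OrderBot P] (k : ℕ) : Type u :=
  CartPi (fun _ : Fin k => P)

/-- A bundled poset with a least element. -/
structure BddPoset : Type (u + 1) where
  carrier : Type u
  [po : PartialOrder carrier]
  [ob : OrderBot carrier]

attribute [instance] BddPoset.po BddPoset.ob

instance : CoeSort BddPoset.{u} (Type u) := ⟨BddPoset.carrier⟩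

/-- Prime with respect to the join: not order-isomorphic to a join `A * B = A × B` of two
abstract polytopes of rank at least `0`. -/
def JoinPrime (X : Type u) [PartialOrder X] [OrderBot X] : Prop :=
  ¬ ∃ (A B : BddPoset.{u}) (a b : ℤ), 0 ≤ a ∧ 0 ≤ b ∧
      IsAbstractPolytope A.carrier a ∧ IsAbstractPolytope B.carrier b ∧
      Nonempty (X ≃o (A.carrier × B.carrier))

/-- Prime with respect to the Cartesian product: not order-isomorphic to a Cartesian product
of two abstract polytopes of rank at least `1`. -/
def CartPrime (X : Type u) [PartialOrder X] [OrderBot X] : Prop :=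
  ¬ ∃ (A B : BddPoset.{u}) (a b : ℤ), 1 ≤ a ∧ 1 ≤ b ∧
      IsAbstractPolytope A.carrier a ∧ IsAbstractPolytope B.carrier b ∧
      Nonempty (X ≃o CartProd A.carrier B.carrier)

/-- `R` is a factor of `X` with respect to the join. -/
def JoinFactor (R : BddPoset.{u}) (X : Type u) [PartialOrder X] [OrderBot X] : Prop :=
  ∃ S : BddPoset.{u}, (∃ s : ℤ, IsAbstractPolytope S.carrier s) ∧
    Nonempty (X ≃o (R.carrier × S.carrier))

/-- `R` is a factor of `X` with respect to the Cartesian product. -/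
def CartFactor (R : BddPoset.{u}) (X : Type u) [PartialOrder X] [OrderBot X] : Prop :=
  ∃ S : BddPoset.{u}, (∃ s : ℤ, IsAbstractPolytope S.carrier s) ∧
    Nonempty (X ≃o CartProd R.carrier S.carrier)

/-- Relatively prime with respect to the join: no join-prime abstract polytope of rank `≥ 0` is a
join-factor of both. -/
def JoinRelPrime (X : Type u) [PartialOrder X] [OrderBot X]
    (Y : Type u) [PartialOrder Y] [OrderBot Y] : Prop :=
  ¬ ∃ R : BddPoset.{u}, (∃ r : ℤ, 0 ≤ r ∧ IsAbstractPolytope R.carrier r) ∧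
      JoinPrime R.carrier ∧ JoinFactor R X ∧ JoinFactor R Y

/-- Relatively prime with respect to the Cartesian product. -/
def CartRelPrime (X : Type u) [PartialOrder X] [OrderBot X]
    (Y : Type u) [PartialOrder Y] [OrderBot Y] : Prop :=
  ¬ ∃ R : BddPoset.{u}, (∃ r : ℤ, 1 ≤ r ∧ IsAbstractPolytope R.carrier r) ∧
      CartPrime R.carrier ∧ CartFactor R X ∧ CartFactor R Y

/-- A pyramid: order-isomorphic to `Q * pt` for some abstract polytope `Q`, where
`pt = Bool` is the two-element chain. -/
def IsPyramid (X : Type u) [PartialOrder X] [OrderBot X] : Prop :=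
  ∃ Q : BddPoset.{u}, (∃ q : ℤ, IsAbstractPolytope Q.carrier q) ∧
    Nonempty (X ≃o (Q.carrier × Bool))

/-- A prism: order-isomorphic to `Q ×c I` for some abstract polytope `Q`, where
`I = Bool × Bool` is the four-element rank-one polytope. -/
def IsPrism (X : Type u) [PartialOrder X] [OrderBot X] : Prop :=
  ∃ Q : BddPoset.{u}, (∃ q : ℤ, IsAbstractPolytope Q.carrier q) ∧
    Nonempty (X ≃o CartProd Q.carrier (Bool × Bool))

/-- The homomorphism from `Equiv.Perm ι` to automorphisms of `ι → G` permuting the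
coordinates: `σ` sends `v` to `v ∘ σ⁻¹`. -/
def permHom (ι : Type v) (G : Type u) [Group G] : Equiv.Perm ι →* MulAut (ι → G) where
  toFun σ :=
    { toFun := fun v => v ∘ σ.symm
      invFun := fun v => v ∘ σ
      left_inv := fun v => by funext i; simp
      right_inv := fun v => by funext i; simp
      map_mul' := fun v w => rfl }
  map_one' := by apply MulEquiv.ext; intro v; funext i; rfl
  map_mul' σ τ := by apply MulEquiv.ext; intro v; funext i; rfl


/-!
An automorphism `f` of `ι → Q` maps the interval below an axis top `update ⊥ i ⊤`, a copy of
`Q`, onto the interval below `w = f (update ⊥ i ⊤)`, which is the product of the intervals below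
the coordinates of `w`. The factors of an abstract polytope are abstract polytopes (they are lower
intervals, graded because their maximal chains glue with a fixed chain above), so join-primality
of `Q` leaves `w` a single coordinate `σ i` different from `⊥`; comparing with `f⁻¹` gives
`w = update ⊥ (σ i) ⊤`. Then `f` restricts to isomorphisms `g i : Q ≃o Q` between axes, and `f`
is the wreath element `(g ∘ σ⁻¹, σ)`, as an automorphism of `ι → Q` is determined by its values
on the axes.
-/

open Set Function

section Chains

variable {α : Type*} [PartialOrder α]

structure IsMaxChainOn (s C : Set α) : Prop where
  subset : C ⊆ s
  isChain : IsChain (· ≤ ·) C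
  mem_of_comparable : ∀ u ∈ s, (∀ v ∈ C, u ≤ v ∨ v ≤ u) → u ∈ C

theorem IsMaxChainOn.isMaxChain {C : Set α} (h : IsMaxChainOn univ C) :
    IsMaxChain (· ≤ ·) C := by
  refine ⟨h.isChain, fun t ht hCt => hCt.antisymm fun u hu => ?_⟩
  refine h.mem_of_comparable u trivial fun v hv => ?_
  obtain rfl | huv := eq_or_ne u v
  · exact Or.inl le_rfl
  · exact ht hu (hCt hv) huv

theorem isMaxChain_subtype_iff {s : Set α} {c : Set s} :
    IsMaxChain (· ≤ ·) c ↔ IsMaxChainOn s (Subtype.val '' c) := by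
  constructor
  · rintro ⟨hc, hmax⟩
    refine ⟨by rintro _ ⟨a, -, rfl⟩; exact a.2, ?_, fun u hu hcomp => ?_⟩
    · rintro _ ⟨a, ha, rfl⟩ _ ⟨b, hb, rfl⟩ hne
      exact hc ha hb fun h => hne (congrArg Subtype.val h)
    · have hins : IsChain (· ≤ ·) (insert ⟨u, hu⟩ c) :=
        hc.insert fun b hb _ => hcomp b ⟨b, hb, rfl⟩
      exact ⟨⟨u, hu⟩, (hmax hins (subset_insert _ _)) ▸ mem_insert _ _, rfl⟩
  · rintro ⟨-, hc, hmax⟩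
    refine ⟨fun a ha b hb hne => hc ⟨a, ha, rfl⟩ ⟨b, hb, rfl⟩ (Subtype.val_injective.ne hne),
      fun t ht hct => hct.antisymm fun x hx => ?_⟩
    obtain ⟨y, hy, hyx⟩ := hmax x x.2 fun v ⟨w, hw, hwv⟩ => by
      subst hwv
      obtain rfl | hne := eq_or_ne x w
      · exact Or.inl le_rfl
      · exact ht hx (hct hw) hne
    rwa [← Subtype.val_injective hyx]

theorem IsChain.exists_isMaxChainOn {s C : Set α} (hC : IsChain (· ≤ ·) C) (hCs : C ⊆ s) :
    ∃ D, IsMaxChainOn s D ∧ C ⊆ D := by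
  have hc : IsChain (· ≤ ·) (Subtype.val ⁻¹' C : Set s) :=
    fun a ha b hb hne => hC ha hb (Subtype.val_injective.ne hne)
  obtain ⟨M, hM, hcM⟩ := hc.exists_maxChain
  exact ⟨_, isMaxChain_subtype_iff.mp hM, fun x hx => ⟨⟨x, hCs hx⟩, hcM hx, rfl⟩⟩

theorem IsMaxChainOn.right_mem_Iic {q : α} {D : Set α} (h : IsMaxChainOn (Iic q) D) : q ∈ D :=
  h.mem_of_comparable q le_rfl fun _ hv => Or.inr (h.subset hv)

theorem IsMaxChainOn.left_mem_Ici {q : α} {E : Set α} (h : IsMaxChainOn (Ici q) E) : q ∈ E :=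
  h.mem_of_comparable q le_rfl fun _ hv => Or.inl (h.subset hv)

theorem IsMaxChainOn.inter_Iic_Ici {q : α} {D E : Set α} (hD : IsMaxChainOn (Iic q) D)
    (hE : IsMaxChainOn (Ici q) E) : D ∩ E = {q} :=
  eq_singleton_iff_unique_mem.mpr ⟨⟨hD.right_mem_Iic, hE.left_mem_Ici⟩,
    fun _ hv => le_antisymm (hD.subset hv.1) (hE.subset hv.2)⟩

theorem IsMaxChainOn.isMaxChain_union {q : α} {D E : Set α} (hD : IsMaxChainOn (Iic q) D)
    (hE : IsMaxChainOn (Ici q) E) : IsMaxChain (· ≤ ·) (D ∪ E) := by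
  have hle : ∀ a ∈ D, ∀ b ∈ E, a ≤ b := fun a ha b hb => (hD.subset ha).trans (hE.subset hb)
  refine IsMaxChainOn.isMaxChain ⟨subset_univ _, ?_, fun u _ hcomp => ?_⟩
  · rintro a (ha | ha) b (hb | hb) hne
    · exact hD.isChain ha hb hne
    · exact Or.inl (hle a ha b hb)
    · exact Or.inr (hle b hb a ha)
    · exact hE.isChain ha hb hne
  · rcases hcomp q (Or.inl hD.right_mem_Iic) with huq | hqu
    · exact Or.inl (hD.mem_of_comparable u huq fun v hv => hcomp v (Or.inl hv))
    · exact Or.inr (hE.mem_of_comparable u hqu fun v hv => hcomp v (Or.inr hv))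

end Chains

section Transfer

variable {α β : Type*} [PartialOrder α] [PartialOrder β]

def OrderIso.subtypeEquiv (e : α ≃o β) {p : α → Prop} {q : β → Prop}
    (h : ∀ a, p a ↔ q (e a)) : {a // p a} ≃o {b // q b} :=
  { e.toEquiv.subtypeEquiv h with map_rel_iff' := e.le_iff_le }

def OrderIso.IicCongr (e : α ≃o β) {a : α} {b : β} (h : e a = b) : Iic a ≃o Iic b :=
  e.subtypeEquiv fun x => by rw [mem_Iic, mem_Iic, ← h, e.le_iff_le]

def OrderIso.IccCongr (e : α ≃o β) (x z : α) : Icc x z ≃o Icc (e x) (e z) :=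
  e.subtypeEquiv fun a => by simp only [mem_Icc, e.le_iff_le]

def Set.OrdConnected.orderIsoIcc {s : Set α} (hs : s.OrdConnected) (x z : s) :
    Icc x z ≃o Icc (x : α) z where
  toFun a := ⟨a.1, a.2.1, a.2.2⟩
  invFun b := ⟨⟨b, hs.out x.2 z.2 b.2⟩, b.2.1, b.2.2⟩
  left_inv _ := rfl
  right_inv _ := rfl
  map_rel_iff' := Iff.rfl

-- Conditions (ii) and (iii) of `IsAbstractPolytope` at the interval `[x, z]`.
def IccConnected (x z : α) : Prop :=
  (∃ c : Set (Icc x z), IsMaxChain (· ≤ ·) c ∧ 4 ≤ c.ncard) →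
    ∀ F G : Icc x z, (F : α) ≠ x → (F : α) ≠ z → (G : α) ≠ x → (G : α) ≠ z →
      Relation.ReflTransGen
        (fun a b : Icc x z =>
          ((a : α) ≠ x ∧ (a : α) ≠ z ∧ (b : α) ≠ x ∧ (b : α) ≠ z) ∧
            ((a : α) ≤ (b : α) ∨ (b : α) ≤ (a : α))) F G

def IccDiamond (x z : α) : Prop :=
  (∀ c : Set (Icc x z), IsMaxChain (· ≤ ·) c → c.ncard = 4) → {y : α | x < y ∧ y < z}.ncard = 2

theorem ncard_Ioo_eq_ncard_Ioo_bot_top {x z : α} [Fact (x ≤ z)] :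
    {y : α | x < y ∧ y < z}.ncard = (Ioo (⊥ : Icc x z) ⊤).ncard := by
  have himg : Subtype.val '' Ioo (⊥ : Icc x z) ⊤ = {y : α | x < y ∧ y < z} := by
    ext y
    refine ⟨fun ⟨a, ha, hay⟩ => hay ▸ ha, fun ⟨hxy, hyz⟩ => ⟨⟨y, hxy.le, hyz.le⟩, ⟨hxy, hyz⟩, rfl⟩⟩
  rw [← himg, ncard_image_of_injective _ Subtype.val_injective]

variable {x z : β} {x' z' : α}

theorem IccConnected.of_orderIso (hxz : x ≤ z) (hx'z' : x' ≤ z') (E : Icc x z ≃o Icc x' z')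
    (h : IccConnected x' z') : IccConnected x z := by
  have := Fact.mk hxz
  have := Fact.mk hx'z'
  have hx : ∀ a, (E a : α) = x' ↔ (a : β) = x := fun a =>
    Subtype.ext_iff.symm.trans ((map_eq_bot_iff E).trans Subtype.ext_iff)
  have hz : ∀ a, (E a : α) = z' ↔ (a : β) = z := fun a =>
    Subtype.ext_iff.symm.trans ((map_eq_top_iff E).trans Subtype.ext_iff)
  rintro ⟨c, hc, hc4⟩ F G hF₁ hF₂ hG₁ hG₂
  have hpath := h ⟨E '' c, hc.image E, by rwa [ncard_image_of_injective _ E.injective]⟩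
    (E F) (E G) (by rwa [ne_eq, hx]) (by rwa [ne_eq, hz]) (by rwa [ne_eq, hx]) (by rwa [ne_eq, hz])
  rw [← E.symm_apply_apply F, ← E.symm_apply_apply G]
  refine Relation.ReflTransGen.lift E.symm (fun a b hab => ?_) _ _ hpath
  obtain ⟨a, rfl⟩ := E.surjective a
  obtain ⟨b, rfl⟩ := E.surjective b
  simpa only [Function.onFun, E.symm_apply_apply, ne_eq, hx, hz, Subtype.coe_le_coe,
    E.le_iff_le] using hab

theorem IccDiamond.of_orderIso (hxz : x ≤ z) (hx'z' : x' ≤ z') (E : Icc x z ≃o Icc x' z')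
    (h : IccDiamond x' z') : IccDiamond x z := by
  have := Fact.mk hxz
  have := Fact.mk hx'z'
  intro hall
  have h2 := h fun c hc => by
    simpa only [ncard_image_of_injective _ E.symm.injective] using hall _ (hc.image E.symm)
  rw [ncard_Ioo_eq_ncard_Ioo_bot_top] at h2 ⊢
  rwa [← ncard_image_of_injective _ E.injective, E.image_Ioo, map_bot, map_top]

theorem IsAbstractPolytope.of_forall_Icc [OrderBot α] [OrderBot β] {n k : ℤ}
    (hα : IsAbstractPolytope α n) (hk : -1 ≤ k) (htop : ∃ t : β, IsTop t)
    (hcard : ∀ s : Set β, IsMaxChain (· ≤ ·) s → s.ncard = (k + 2).toNat)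
    (hIcc : ∀ x z : β, x ≤ z → ∃ x' z' : α, x' ≤ z' ∧ Nonempty (Icc x z ≃o Icc x' z')) :
    IsAbstractPolytope β k := by
  refine ⟨hk, htop, hcard, fun x z hxz => ?_, fun x z hxz => ?_⟩
  · obtain ⟨x', z', hx'z', ⟨E⟩⟩ := hIcc x z hxz
    exact IccConnected.of_orderIso hxz hx'z' E (hα.connected x' z' hx'z')
  · obtain ⟨x', z', hx'z', ⟨E⟩⟩ := hIcc x z hxz.le
    refine IccDiamond.of_orderIso hxz.le hx'z' E (hα.diamond x' z' (hx'z'.lt_of_ne ?_))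
    rintro rfl
    have hpt : ∀ a : Icc x' x', (a : α) = x' := fun a => le_antisymm a.2.2 a.2.1
    exact hxz.ne (congrArg Subtype.val (E.injective (Subtype.ext
      ((hpt (E ⟨x, le_rfl, hxz.le⟩)).trans (hpt (E ⟨z, hxz.le, le_rfl⟩)).symm))))

theorem IsAbstractPolytope.of_orderIso [OrderBot α] [OrderBot β] {n : ℤ}
    (hα : IsAbstractPolytope α n) (e : α ≃o β) : IsAbstractPolytope β n := by
  obtain ⟨t, ht⟩ := hα.exists_top
  refine hα.of_forall_Icc hα.neg_one_le ⟨e t, fun b => e.symm_apply_le.mp (ht _)⟩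
    (fun s hs => ?_) fun x z hxz => ⟨e.symm x, e.symm z, e.symm.monotone hxz, ⟨e.symm.IccCongr x z⟩⟩
  rw [← hα.maxChain_card _ (hs.image e.symm), ncard_image_of_injective _ e.symm.injective]

end Transfer

section Polytope

variable {Q : Type*} [PartialOrder Q] [OrderBot Q] {n : ℤ}

theorem IsAbstractPolytope.finite_of_isMaxChain (hQ : IsAbstractPolytope Q n) {C : Set Q}
    (hC : IsMaxChain (· ≤ ·) C) : C.Finite := by
  refine finite_of_ncard_ne_zero ?_
  rw [hQ.maxChain_card C hC]
  have := hQ.neg_one_le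
  omega

theorem IsAbstractPolytope.nontrivial (hQ : IsAbstractPolytope Q n) (hn : 0 ≤ n) :
    Nontrivial Q := by
  obtain ⟨C, hC, -⟩ := (IsChain.empty (r := fun a b : Q => a ≤ b)).exists_maxChain
  have hcard : 1 < C.ncard := by
    rw [hQ.maxChain_card C hC]
    omega
  obtain ⟨a, -, b, -, hab⟩ := (one_lt_ncard (hQ.finite_of_isMaxChain hC)).mp hcard
  exact ⟨a, b, hab⟩

theorem IsTop.ne_bot [Nontrivial Q] {T : Q} (hT : IsTop T) : T ≠ ⊥ := fun h => by
  obtain ⟨a, ha⟩ := exists_ne (⊥ : Q)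
  exact ha (le_bot_iff.mp (h ▸ hT a))

/-- Gluing `D` and `E` at `q` gives a maximal chain of `Q`, whose cardinality is fixed. -/
theorem IsAbstractPolytope.ncard_add_ncard_eq (hQ : IsAbstractPolytope Q n) {q : Q}
    {D E : Set Q} (hD : IsMaxChainOn (Iic q) D) (hE : IsMaxChainOn (Ici q) E) :
    D.Finite ∧ D.ncard + E.ncard = (n + 2).toNat + 1 := by
  have hDE := hD.isMaxChain_union hE
  have hfin := hQ.finite_of_isMaxChain hDE
  refine ⟨hfin.subset subset_union_left, ?_⟩
  rw [← ncard_union_add_ncard_inter _ _ (hfin.subset subset_union_left)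
    (hfin.subset subset_union_right), hD.inter_Iic_Ici hE, ncard_singleton,
    hQ.maxChain_card _ hDE]

theorem IsAbstractPolytope.exists_isAbstractPolytope_Iic (hQ : IsAbstractPolytope Q n) {q : Q}
    (hq : q ≠ ⊥) : ∃ k : ℤ, 0 ≤ k ∧ IsAbstractPolytope (Iic q) k := by
  obtain ⟨E, hE, -⟩ := IsChain.empty.exists_isMaxChainOn (empty_subset (Ici q))
  obtain ⟨D, hD, hbq⟩ := (IsChain.pair (bot_le (a := q))).exists_isMaxChainOn
    (s := Iic q) (pair_subset bot_le le_rfl)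
  have hD₂ : 2 ≤ D.ncard := ncard_pair hq.symm ▸ ncard_le_ncard hbq (hQ.ncard_add_ncard_eq hD hE).1
  have hDE := (hQ.ncard_add_ncard_eq hD hE).2
  refine ⟨D.ncard - 2, by omega, hQ.of_forall_Icc (by omega) ⟨⟨q, le_rfl⟩, fun b => b.2⟩
    (fun s hs => ?_) fun x z hxz => ⟨x, z, hxz, ⟨ordConnected_Iic.orderIsoIcc x z⟩⟩⟩
  have hsE := (hQ.ncard_add_ncard_eq (isMaxChain_subtype_iff.mp hs) hE).2
  rw [ncard_image_of_injective s Subtype.val_injective] at hsE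
  omega

end Polytope

section JoinPrime

def IsTop.orderIsoIicProdBot {A B : Type*} [PartialOrder A] [PartialOrder B] [OrderBot B]
    {t : A} (ht : IsTop t) : A ≃o Iic (t, (⊥ : B)) where
  toFun a := ⟨(a, ⊥), ht a, le_rfl⟩
  invFun p := p.1.1
  left_inv _ := rfl
  right_inv p := Subtype.ext (Prod.ext rfl (le_bot_iff.mp p.2.2).symm)
  map_rel_iff' := by simp [← Subtype.coe_le_coe, Prod.mk_le_mk]

def OrderIso.piSplitAt {ι : Type*} [DecidableEq ι] (i : ι) (X : ι → Type*) [∀ i, LE (X i)] :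
    (∀ j, X j) ≃o X i × ∀ j : {j // j ≠ i}, X j where
  toEquiv := Equiv.piSplitAt i X
  map_rel_iff' {f g} := by
    simp only [Equiv.piSplitAt_apply, Prod.mk_le_mk, Pi.le_def, Subtype.forall]
    refine ⟨fun ⟨hi, hne⟩ j => ?_, fun h => ⟨h i, fun j _ => h j⟩⟩
    by_cases hj : j = i
    · subst hj
      exact hi
    · exact hne j hj

def OrderIso.IicPi {ι : Type*} {X : ι → Type*} [∀ i, Preorder (X i)] (w : ∀ i, X i) :
    Iic w ≃o ∀ i, Iic (w i) where
  toFun v i := ⟨v.1 i, v.2 i⟩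
  invFun u := ⟨fun i => u i, fun i => (u i).2⟩
  left_inv _ := rfl
  right_inv _ := rfl
  map_rel_iff' := Iff.rfl

variable {Q : Type u} [PartialOrder Q] [OrderBot Q] {n : ℤ}

/-- With `t` the top of `A`, the factor `A` sits in `Q` as the interval below `e.symm (t, ⊥)`. -/
theorem IsAbstractPolytope.exists_isAbstractPolytope_fst (hQ : IsAbstractPolytope Q n)
    {A B : Type*} [PartialOrder A] [OrderBot A] [PartialOrder B] [OrderBot B]
    (e : Q ≃o A × B) (hA : ∃ a : A, a ≠ ⊥) : ∃ k : ℤ, 0 ≤ k ∧ IsAbstractPolytope A k := by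
  obtain ⟨T, hT⟩ := hQ.exists_top
  have htA : IsTop (e T).1 := fun a => (e.symm_apply_le.mp (hT (e.symm (a, ⊥)))).1
  have hq : e.symm ((e T).1, ⊥) ≠ ⊥ := by
    rw [Ne, map_eq_bot_iff]
    intro h
    obtain ⟨a, ha⟩ := hA
    have htA_bot : (e T).1 = ⊥ := congrArg Prod.fst h
    exact ha (le_bot_iff.mp (htA_bot ▸ htA a))
  obtain ⟨k, hk, hpoly⟩ := hQ.exists_isAbstractPolytope_Iic hq
  exact ⟨k, hk, hpoly.of_orderIso (htA.orderIsoIicProdBot.trans (e.symm.IicCongr rfl)).symm⟩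

theorem JoinPrime.false_of_orderIso_prod (hprime : JoinPrime Q) (hQ : IsAbstractPolytope Q n)
    {A B : Type u} [PartialOrder A] [OrderBot A] [PartialOrder B] [OrderBot B]
    (e : Q ≃o A × B) (hA : ∃ a : A, a ≠ ⊥) (hB : ∃ b : B, b ≠ ⊥) : False := by
  obtain ⟨a, ha, hpA⟩ := hQ.exists_isAbstractPolytope_fst e hA
  obtain ⟨b, hb, hpB⟩ := hQ.exists_isAbstractPolytope_fst (e.trans OrderIso.prodComm) hB
  exact hprime ⟨⟨A⟩, ⟨B⟩, a, b, ha, hb, hpA, hpB, ⟨e⟩⟩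

theorem JoinPrime.eq_of_orderIso_pi (hprime : JoinPrime Q) (hQ : IsAbstractPolytope Q n)
    {ι : Type} [DecidableEq ι] {X : ι → Type u} [∀ i, PartialOrder (X i)] [∀ i, OrderBot (X i)]
    (e : Q ≃o ∀ i, X i) {i j : ι} (hi : ∃ x : X i, x ≠ ⊥) (hj : ∃ x : X j, x ≠ ⊥) : i = j := by
  by_contra hij
  obtain ⟨x, hx⟩ := hj
  refine hprime.false_of_orderIso_prod hQ (e.trans (OrderIso.piSplitAt i X)) hi
    ⟨update ⊥ ⟨j, Ne.symm hij⟩ x, fun h => hx ?_⟩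
  simpa using congrFun h ⟨j, Ne.symm hij⟩

theorem JoinPrime.eq_of_orderIso_Iic (hprime : JoinPrime Q) (hQ : IsAbstractPolytope Q n)
    {ι : Type} [DecidableEq ι] {w : ι → Q} (e : Q ≃o Iic w) {i j : ι} (hi : w i ≠ ⊥)
    (hj : w j ≠ ⊥) : i = j :=
  hprime.eq_of_orderIso_pi hQ (e.trans (OrderIso.IicPi w))
    ⟨⊤, fun h => hi (congrArg Subtype.val h)⟩ ⟨⊤, fun h => hj (congrArg Subtype.val h)⟩

end JoinPrime

section Wreath

def wreathHom (ι : Type*) (Q : Type*) [LE Q] :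
    (ι → (Q ≃o Q)) ⋊[permHom ι (Q ≃o Q)] Equiv.Perm ι →* ((ι → Q) ≃o (ι → Q)) where
  toFun x :=
    { toFun := fun v j => x.left j (v (x.right.symm j))
      invFun := fun v i => (x.left (x.right i)).symm (v (x.right i))
      left_inv := fun v => by funext i; simp
      right_inv := fun v => by funext j; simp
      map_rel_iff' := by
        intro v w
        simp only [Equiv.coe_fn_mk, Pi.le_def, OrderIso.le_iff_le]
        exact x.right.symm.forall_congr_right (q := fun i => v i ≤ w i) }
  map_one' := rfl
  map_mul' _ _ := OrderIso.ext rfl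

@[simp]
theorem wreathHom_apply {ι Q : Type*} [LE Q]
    (x : (ι → (Q ≃o Q)) ⋊[permHom ι (Q ≃o Q)] Equiv.Perm ι) (v : ι → Q) (j : ι) :
    wreathHom ι Q x v j = x.left j (v (x.right.symm j)) :=
  rfl

variable {ι : Type*} [DecidableEq ι] {Q : Type*} [PartialOrder Q] [OrderBot Q]

theorem eq_of_update_bot_eq {i j : ι} {a b : Q} (h : update (⊥ : ι → Q) i a = update ⊥ j b)
    (ha : a ≠ ⊥) : i = j := by
  by_contra hij
  exact ha (by simpa [update_of_ne hij] using congrFun h i)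

theorem wreathHom_apply_update_bot (x : (ι → (Q ≃o Q)) ⋊[permHom ι (Q ≃o Q)] Equiv.Perm ι)
    (i : ι) (q : Q) :
    wreathHom ι Q x (update ⊥ i q) = update ⊥ (x.right i) (x.left (x.right i) q) := by
  funext j
  by_cases hj : j = x.right i
  · subst hj
    simp
  · have hne : x.right.symm j ≠ i := fun h => hj (x.right.symm_apply_eq.mp h)
    simp [update_of_ne hne, update_of_ne hj]

theorem wreathHom_injective [Nontrivial Q] : Injective (wreathHom ι Q) := by
  rw [injective_iff_map_eq_one]
  rintro ⟨g, σ⟩ h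
  have hfix : ∀ i q, update (⊥ : ι → Q) (σ i) (g (σ i) q) = update ⊥ i q := fun i q =>
    (wreathHom_apply_update_bot ⟨g, σ⟩ i q).symm.trans (DFunLike.congr_fun h _)
  obtain ⟨T, hT⟩ := exists_ne (⊥ : Q)
  obtain rfl : σ = 1 := Equiv.ext fun i =>
    eq_of_update_bot_eq (hfix i T) ((map_eq_bot_iff (g (σ i))).not.mpr hT)
  obtain rfl : g = 1 := funext fun i => OrderIso.ext (funext fun q => by
    simpa using congrFun (hfix i q) i)
  rfl

theorem OrderIso.apply_le_of_forall_update_bot {f g : (ι → Q) ≃o (ι → Q)}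
    (h : ∀ i q, f (update ⊥ i q) = g (update ⊥ i q)) (v : ι → Q) : f v ≤ g v := by
  rw [← f.le_symm_apply]
  intro i
  calc v i = update (⊥ : ι → Q) i (v i) i := by rw [update_self]
    _ = f.symm (g (update ⊥ i (v i))) i := by rw [← h, f.symm_apply_apply]
    _ ≤ f.symm (g v) i :=
      f.symm.monotone (g.monotone (update_le_iff.mpr ⟨le_rfl, fun _ _ => bot_le⟩)) i

theorem OrderIso.ext_update_bot {f g : (ι → Q) ≃o (ι → Q)}
    (h : ∀ i q, f (update ⊥ i q) = g (update ⊥ i q)) : f = g :=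
  OrderIso.ext (funext fun v => le_antisymm (apply_le_of_forall_update_bot h v)
    (apply_le_of_forall_update_bot (fun i q => (h i q).symm) v))

def IsTop.orderIsoIicUpdateBot {T : Q} (hT : IsTop T) (i : ι) :
    Q ≃o Iic (update (⊥ : ι → Q) i T) where
  toFun q := ⟨update ⊥ i q, update_le_update_iff'.mpr (hT q)⟩
  invFun v := v.1 i
  left_inv q := by simp
  right_inv v := Subtype.ext (update_eq_iff.mpr
    ⟨rfl, fun k hk => (le_bot_iff.mp ((le_update_iff.mp v.2).2 k hk)).symm⟩)
  map_rel_iff' := update_le_update_iff'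

theorem exists_orderIso_of_map_update_top {T : Q} (hT : IsTop T) (f : (ι → Q) ≃o (ι → Q))
    {i j : ι} (h : f (update ⊥ i T) = update ⊥ j T) :
    ∃ g : Q ≃o Q, ∀ q, f (update ⊥ i q) = update ⊥ j (g q) :=
  ⟨(hT.orderIsoIicUpdateBot i).trans ((f.IicCongr h).trans (hT.orderIsoIicUpdateBot j).symm),
    fun q => by
      have := (hT.orderIsoIicUpdateBot j).apply_symm_apply
        (f.IicCongr h (hT.orderIsoIicUpdateBot i q))
      exact (congrArg Subtype.val this).symm⟩

theorem wreathHom_surjective [Nontrivial Q] {T : Q} (hT : IsTop T)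
    (hperm : ∀ (f : (ι → Q) ≃o (ι → Q)) (i : ι), ∃ j, f (update ⊥ i T) = update ⊥ j T) :
    Surjective (wreathHom ι Q) := by
  intro f
  choose σ hσ using hperm f
  choose τ hτ using hperm f.symm
  have hτσ : ∀ i, τ (σ i) = i := fun i =>
    eq_of_update_bot_eq (by rw [← hτ, ← hσ, f.symm_apply_apply]) hT.ne_bot
  have hστ : ∀ j, σ (τ j) = j := fun j =>
    eq_of_update_bot_eq (by rw [← hσ, ← hτ, f.apply_symm_apply]) hT.ne_bot
  choose g hg using fun i => exists_orderIso_of_map_update_top hT f (hσ i)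
  refine ⟨⟨fun j => g (τ j), ⟨σ, τ, hτσ, hστ⟩⟩, OrderIso.ext_update_bot fun i q => ?_⟩
  rw [wreathHom_apply_update_bot, hg]
  simp [hτσ]

end Wreath

section Automorphisms

variable {Q : Type u} [PartialOrder Q] [OrderBot Q] {n : ℤ} {ι : Type} [DecidableEq ι]

/-- The interval below `f (update ⊥ i T)` is a copy of `Q`, so it is not a product of two
nontrivial intervals. -/
theorem JoinPrime.exists_map_update_top_eq_update_bot (hprime : JoinPrime Q)
    (hQ : IsAbstractPolytope Q n) {T : Q} (hT : IsTop T) (f : (ι → Q) ≃o (ι → Q)) (i : ι) :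
    ∃ j r, f (update ⊥ i T) = update ⊥ j r := by
  set w := f (update ⊥ i T)
  have e : Q ≃o Iic w := (hT.orderIsoIicUpdateBot i).trans (f.IicCongr rfl)
  by_cases hw : ∃ j, w j ≠ ⊥
  · obtain ⟨j, hj⟩ := hw
    refine ⟨j, w j, (update_eq_iff.mpr ⟨rfl, fun k hk => ?_⟩).symm⟩
    by_contra hwk
    exact hk (hprime.eq_of_orderIso_Iic hQ e (Ne.symm hwk) hj)
  · push Not at hw
    exact ⟨i, ⊥, (funext hw).trans (update_eq_self i (⊥ : ι → Q)).symm⟩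

theorem JoinPrime.exists_map_update_top_eq_update_top [Nontrivial Q] (hprime : JoinPrime Q)
    (hQ : IsAbstractPolytope Q n) {T : Q} (hT : IsTop T) (f : (ι → Q) ≃o (ι → Q)) (i : ι) :
    ∃ j, f (update ⊥ i T) = update ⊥ j T := by
  obtain ⟨j, r, hr⟩ := hprime.exists_map_update_top_eq_update_bot hQ hT f i
  obtain ⟨k, s, hs⟩ := hprime.exists_map_update_top_eq_update_bot hQ hT f.symm j
  have hle : update (⊥ : ι → Q) i T ≤ update ⊥ k s := by
    rw [← hs, ← f.symm_apply_apply (update ⊥ i T), hr]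
    exact f.symm.monotone (update_le_update_iff'.mpr (hT r))
  obtain rfl : k = i := by
    by_contra hki
    exact hT.ne_bot (le_bot_iff.mp (by simpa [update_of_ne (Ne.symm hki)] using hle i))
  obtain rfl : s = T := le_antisymm (hT s) (by simpa using hle k)
  exact ⟨j, by rw [← hs, f.apply_symm_apply]⟩

end Automorphisms

theorem aut_join_pow_general (Q : Type u) [PartialOrder Q] [OrderBot Q] (n : ℤ) (hn : 0 ≤ n)
    (hQ : IsAbstractPolytope Q n) (hprime : JoinPrime Q) (m : ℕ) :
    Nonempty (((Fin m → Q) ≃o (Fin m → Q)) ≃*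
      (Fin m → (Q ≃o Q)) ⋊[permHom (Fin m) (Q ≃o Q)] Equiv.Perm (Fin m)) := by
  have := hQ.nontrivial hn
  obtain ⟨T, hT⟩ := hQ.exists_top
  have hsurj := wreathHom_surjective (ι := Fin m) hT
    (hprime.exists_map_update_top_eq_update_top hQ hT)
  exact ⟨(MulEquiv.ofBijective _ ⟨wreathHom_injective, hsurj⟩).symm⟩

/-- If `Q` is a join-prime abstract polytope of rank `≥ 0` and `P = Q^{*m}` is the
`m`-fold join of `Q` with itself (`m ≥ 1`), then `Aut(P)` is the wreath product
`(∏_{i=1}^m Aut(Q)) ⋊ Sym(m)`, with `Sym(m)` permuting the coordinates. -/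
theorem aut_join_pow (Q : Type u) [PartialOrder Q] [OrderBot Q] (n : ℤ) (hn : 0 ≤ n)
    (hQ : IsAbstractPolytope Q n) (hprime : JoinPrime Q) (m : ℕ) (hm : 1 ≤ m) :
    Nonempty (((Fin m → Q) ≃o (Fin m → Q)) ≃*
      (Fin m → (Q ≃o Q)) ⋊[permHom (Fin m) (Q ≃o Q)] Equiv.Perm (Fin m)) :=
  aut_join_pow_general Q n hn hQ hprime m
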